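/- The boundariness of a state ϱ of a finite-dimensional quantum system equals the minimal eigenvalue of its density operator: b(ϱ) = λ_min(ϱ). In particular the maximum value b(ϱ) = 1/d over all states on ℋ_d is achieved only by the maximally mixed state ϱ = I/d. -/

import Mathlib

open Matrix
open scoped ComplexOrder

/-- The weight function `t_y(x) = sup{ t ∈ [0,1) : (y - t·x)/(1-t) ∈ Z }`. -/
noncomputable def weight {V : Type*} [AddCommGroup V] [Module ℝ V] (Z : Set V) (y x : V) : ℝ :=
  sSup {t : ℝ | 0 ≤ t ∧ t < 1 ∧ (1 - t)⁻¹ • (y - t • x) ∈ Z}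

/-- The boundariness `b(y) = inf_{x ∈ Z} t_y(x)`. -/
noncomputable def bdness {V : Type*} [AddCommGroup V] [Module ℝ V] (Z : Set V) (y : V) : ℝ :=
  sInf (weight Z y '' Z)

/-! Every state `ϱ` dominates `λ_min • 1` and every state `x` is dominated by `1`, so for
`t ≤ λ_min` the matrix `ϱ - t • x` is positive and `(1 - t)⁻¹ • (ϱ - t • x)` is again a state:
all weights of `ϱ` are at least `λ_min`. Conversely, if `(1 - t)⁻¹ • (ϱ - t • x₀)` is a state
for the projector `x₀` onto a unit eigenvector `u` of `λ_min`, evaluating the quadratic form at `u`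
gives `λ_min - t ≥ 0`. Finally, `λ_min = 1 / d` makes `ϱ - d⁻¹ • 1` a positive matrix of trace
zero, hence zero. -/

open scoped MatrixOrder

section Weight

variable {V : Type*} [AddCommGroup V] [Module ℝ V] {Z : Set V} {y x : V}

lemma bddAbove_weight_set :
    BddAbove {t : ℝ | 0 ≤ t ∧ t < 1 ∧ (1 - t)⁻¹ • (y - t • x) ∈ Z} :=
  ⟨1, fun _ ht => ht.2.1.le⟩

lemma weight_nonneg (hy : y ∈ Z) : 0 ≤ weight Z y x :=
  le_csSup bddAbove_weight_set ⟨le_rfl, zero_lt_one, by simpa using hy⟩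

lemma le_weight_of_forall_mem {c : ℝ} (hy : y ∈ Z) (hc : c ≤ 1)
    (h : ∀ t, 0 ≤ t → t < c → (1 - t)⁻¹ • (y - t • x) ∈ Z) : c ≤ weight Z y x := by
  refine le_of_forall_lt_imp_le_of_dense fun t ht => ?_
  rcases lt_or_ge t 0 with ht0 | ht0
  · exact ht0.le.trans (weight_nonneg hy)
  · exact le_csSup bddAbove_weight_set ⟨ht0, ht.trans_le hc, h t ht0 ht⟩

lemma weight_le_of_forall_mem {c : ℝ} (hc : 0 ≤ c)
    (h : ∀ t, 0 ≤ t → t < 1 → (1 - t)⁻¹ • (y - t • x) ∈ Z → t ≤ c) : weight Z y x ≤ c :=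
  Real.sSup_le (fun t ⟨ht0, ht1, hmem⟩ => h t ht0 ht1 hmem) hc

lemma bdness_eq_of_le_weight {c : ℝ} {x₀ : V} (hy : y ∈ Z) (hle : ∀ x ∈ Z, c ≤ weight Z y x)
    (hx₀ : x₀ ∈ Z) (hx₀c : weight Z y x₀ ≤ c) : bdness Z y = c :=
  le_antisymm
    (csInf_le_of_le ⟨0, Set.forall_mem_image.2 fun _ _ => weight_nonneg hy⟩ ⟨x₀, hx₀, rfl⟩ hx₀c)
    (le_csInf ⟨_, x₀, hx₀, rfl⟩ (Set.forall_mem_image.2 hle))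

end Weight

namespace Matrix

def states (n 𝕜 : Type*) [Fintype n] [RCLike 𝕜] : Set (Matrix n n 𝕜) :=
  {ρ | ρ.PosSemidef ∧ ρ.trace = 1}

variable {n 𝕜 : Type*} [Fintype n] [DecidableEq n] [RCLike 𝕜] {A : Matrix n n 𝕜}

lemma IsHermitian.algebraMap_le_iff (hA : A.IsHermitian) {c : ℝ} :
    algebraMap ℝ _ c ≤ A ↔ ∀ i, c ≤ hA.eigenvalues i := by
  rw [algebraMap_le_iff_le_spectrum hA.isSelfAdjoint, hA.spectrum_real_eq_range_eigenvalues,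
    Set.forall_mem_range]

lemma IsHermitian.le_algebraMap_iff (hA : A.IsHermitian) {c : ℝ} :
    A ≤ algebraMap ℝ _ c ↔ ∀ i, hA.eigenvalues i ≤ c := by
  rw [le_algebraMap_iff_spectrum_le hA.isSelfAdjoint, hA.spectrum_real_eq_range_eigenvalues,
    Set.forall_mem_range]

lemma IsHermitian.algebraMap_iInf_eigenvalues_le (hA : A.IsHermitian) :
    algebraMap ℝ _ (⨅ i, hA.eigenvalues i) ≤ A :=
  hA.algebraMap_le_iff.2 fun i => ciInf_le (Set.finite_range _).bddBelow i

lemma PosSemidef.eigenvalues_le_re_trace (hA : A.PosSemidef) (i : n) :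
    hA.isHermitian.eigenvalues i ≤ RCLike.re A.trace := by
  rw [hA.isHermitian.trace_eq_sum_eigenvalues, map_sum]
  simp only [RCLike.ofReal_re]
  exact Finset.single_le_sum (fun j _ => hA.eigenvalues_nonneg j) (Finset.mem_univ i)

lemma le_one_of_mem_states (hA : A ∈ states n 𝕜) : A ≤ 1 := by
  simpa using hA.1.isHermitian.le_algebraMap_iff (c := 1) |>.2 fun i => by
    simpa [hA.2] using hA.1.eigenvalues_le_re_trace i

lemma smul_sub_smul_mem_states {ϱ x : Matrix n n 𝕜} (hϱ : ϱ ∈ states n 𝕜) (hx : x ∈ states n 𝕜)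
    {t : ℝ} (ht0 : 0 ≤ t) (ht1 : t < 1) (htϱ : t ≤ ⨅ i, hϱ.1.isHermitian.eigenvalues i) :
    (1 - t)⁻¹ • (ϱ - t • x) ∈ states n 𝕜 := by
  have hle : t • x ≤ ϱ := calc
    t • x ≤ t • 1 := smul_le_smul_of_nonneg_left (le_one_of_mem_states hx) ht0
    _ = algebraMap ℝ _ t := (Algebra.algebraMap_eq_smul_one t).symm
    _ ≤ algebraMap ℝ _ (⨅ i, hϱ.1.isHermitian.eigenvalues i) := by gcongr
    _ ≤ ϱ := hϱ.1.isHermitian.algebraMap_iInf_eigenvalues_le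
  refine ⟨(sub_nonneg.2 hle).posSemidef.smul (inv_nonneg.2 (sub_nonneg.2 ht1.le)), ?_⟩
  have h1t : (1 - t) • (1 : 𝕜) = 1 - t • 1 := by rw [sub_smul, one_smul]
  rw [trace_smul, trace_sub, trace_smul, hϱ.2, hx.2, ← h1t, smul_smul,
    inv_mul_cancel₀ (sub_pos.2 ht1).ne', one_smul]

omit [DecidableEq n] in
lemma vecMulVec_self_star_mem_states {u : n → 𝕜} (hu : star u ⬝ᵥ u = 1) :
    vecMulVec u (star u) ∈ states n 𝕜 :=
  ⟨posSemidef_vecMulVec_self_star u, by rw [trace_vecMulVec, dotProduct_comm, hu]⟩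

omit [DecidableEq n] in
lemma weight_states_vecMulVec_le {ϱ : Matrix n n 𝕜} {u : n → 𝕜} {c : ℝ} (hc : 0 ≤ c)
    (hu : star u ⬝ᵥ u = 1) (hϱu : ϱ *ᵥ u = c • u) :
    weight (states n 𝕜) ϱ (vecMulVec u (star u)) ≤ c := by
  refine weight_le_of_forall_mem hc fun t _ ht1 hmem => ?_
  have hpsd : (ϱ - t • vecMulVec u (star u)).PosSemidef := by
    simpa [smul_smul, (sub_pos.2 ht1).ne'] using hmem.1.smul (sub_nonneg.2 ht1.le)
  have hform : star u ⬝ᵥ (ϱ - t • vecMulVec u (star u)) *ᵥ u = ((c - t : ℝ) : 𝕜) := by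
    simp [sub_mulVec, hϱu, smul_mulVec, vecMulVec_mulVec, hu, dotProduct_sub,
      Algebra.algebraMap_eq_smul_one, sub_smul]
  have := hpsd.dotProduct_mulVec_nonneg u
  rw [hform, RCLike.ofReal_nonneg] at this
  linarith

theorem bdness_states_eq_iInf_eigenvalues [Nonempty n] {ϱ : Matrix n n 𝕜}
    (hϱ : ϱ ∈ states n 𝕜) :
    bdness (states n 𝕜) ϱ = ⨅ i, hϱ.1.isHermitian.eigenvalues i := by
  set hA := hϱ.1.isHermitian
  obtain ⟨i₀, hi₀⟩ := exists_eq_ciInf_of_finite (f := hA.eigenvalues)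
  have hmin_nonneg : 0 ≤ ⨅ i, hA.eigenvalues i := hi₀ ▸ hϱ.1.eigenvalues_nonneg i₀
  have hmin_le_one : ⨅ i, hA.eigenvalues i ≤ 1 :=
    hi₀ ▸ (hϱ.1.eigenvalues_le_re_trace i₀).trans (by simp [hϱ.2])
  set u : n → 𝕜 := ⇑(hA.eigenvectorBasis i₀)
  have hu : star u ⬝ᵥ u = 1 := by
    rw [dotProduct_comm]
    exact (orthonormal_iff_ite.1 hA.eigenvectorBasis.orthonormal i₀ i₀).trans (if_pos rfl)
  have hϱu : ϱ *ᵥ u = (⨅ i, hA.eigenvalues i) • u := hi₀ ▸ hA.mulVec_eigenvectorBasis i₀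
  refine bdness_eq_of_le_weight hϱ (fun x hx => ?_) (vecMulVec_self_star_mem_states hu)
    (weight_states_vecMulVec_le hmin_nonneg hu hϱu)
  exact le_weight_of_forall_mem hϱ hmin_le_one fun t ht0 ht =>
    smul_sub_smul_mem_states hϱ hx ht0 (ht.trans_le hmin_le_one) ht.le

lemma eq_inv_card_smul_one_of_le_iInf_eigenvalues [Nonempty n] {ϱ : Matrix n n 𝕜}
    (hϱ : ϱ ∈ states n 𝕜) (h : (Fintype.card n : ℝ)⁻¹ ≤ ⨅ i, hϱ.1.isHermitian.eigenvalues i) :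
    ϱ = (Fintype.card n : 𝕜)⁻¹ • 1 := by
  have hle : algebraMap ℝ _ (Fintype.card n : ℝ)⁻¹ ≤ ϱ :=
    (algebraMap_le_algebraMap.2 h).trans hϱ.1.isHermitian.algebraMap_iInf_eigenvalues_le
  have hcard :
      algebraMap ℝ (Matrix n n 𝕜) (Fintype.card n : ℝ)⁻¹ = (Fintype.card n : 𝕜)⁻¹ • 1 := by
    rw [Algebra.algebraMap_eq_smul_one, RCLike.real_smul_eq_coe_smul (K := 𝕜), RCLike.ofReal_inv,
      RCLike.ofReal_natCast]
  rw [hcard] at hle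
  refine sub_eq_zero.1 <| (sub_nonneg.2 hle).posSemidef.trace_eq_zero_iff.1 ?_
  simp [hϱ.2]

end Matrix

theorem bdness_state_eq_min_eigenvalue {d : ℕ} [NeZero d]
    (ϱ : Matrix (Fin d) (Fin d) ℂ) (hpos : ϱ.PosSemidef) (htr : ϱ.trace = 1) :
    (bdness {ρ : Matrix (Fin d) (Fin d) ℂ | ρ.PosSemidef ∧ ρ.trace = 1} ϱ =
      ⨅ i, hpos.isHermitian.eigenvalues i) ∧
    (bdness {ρ : Matrix (Fin d) (Fin d) ℂ | ρ.PosSemidef ∧ ρ.trace = 1} ϱ = 1 / d →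
      ϱ = ((d : ℂ))⁻¹ • 1) := by
  have hϱ : ϱ ∈ states (Fin d) ℂ := ⟨hpos, htr⟩
  have hb : bdness (states (Fin d) ℂ) ϱ = ⨅ i, hpos.isHermitian.eigenvalues i :=
    bdness_states_eq_iInf_eigenvalues hϱ
  refine ⟨hb, fun h => ?_⟩
  have hmin : ((Fintype.card (Fin d) : ℝ))⁻¹ ≤ ⨅ i, hpos.isHermitian.eigenvalues i := by
    rw [← hb, Fintype.card_fin, ← one_div]
    exact h.ge
  simpa using eq_inv_card_smul_one_of_le_iInf_eigenvalues hϱ hmin
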